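/- arXiv:0912.2723 — 5 statements merged into one kernel-verified Lean document; each statement's English description precedes it below -/
import Mathlib

section
/- Let R be a commutative ring and f(X), g(X) polynomials in R[X] such that the leading coefficient of f is a unit in R. Then the cokernel of the Sylvester matrix of f and g (as an R-linear map R[X]_{<deg g} ⊕ R[X]_{<deg f} → R[X]_{<deg f + deg g}, (a,b) ↦ af + bg) is isomorphic, as an R-module, to the cokernel of the map given by multiplication by g on the quotient ring R[X]/(f(X)). -/
/-!
Since the leading coefficient of `f` is a unit, division with remainder by `f` works over `R`, so
reduction modulo `f` maps the polynomials of degree `< deg f + deg g` onto `R[X] ⧸ (f)`, and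
multiplying by `f` raises degrees by exactly `deg f`. Composing with the projection onto the
cokernel of multiplication by `g` gives a surjection whose kernel is the Sylvester image: if
`p = g x + f c`, reduce `x = f q + b` with `deg b < deg f`; then `p = (c + g q) f + b g`, and
comparing degrees forces `deg (c + g q) < deg g`.
-/

open Polynomial

namespace Polynomial

theorem mul_mem_degreeLT_add {R : Type*} [Semiring R] {p q : R[X]} {m n : ℕ}
    (hp : p ∈ degreeLT R m) (hq : q.natDegree ≤ n) : p * q ∈ degreeLT R (m + n) := by
  rw [mem_degreeLT] at hp ⊢
  calc (p * q).degree ≤ p.degree + q.degree := degree_mul_le p q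
    _ ≤ p.degree + n := by gcongr; exact degree_le_of_natDegree_le hq
    _ < m + n := WithBot.add_lt_add_right WithBot.coe_ne_bot hp
    _ = ↑(m + n) := by push_cast; rfl

variable {R : Type*} [CommRing R] {f : R[X]}

theorem degree_mul_of_isUnit_leadingCoeff (hf : IsUnit f.leadingCoeff) (a : R[X]) :
    (a * f).degree = a.degree + f.degree := by
  have hf₀ : (hf.unit⁻¹ • f).Monic := monic_of_isUnit_leadingCoeff_inv_smul hf
  calc (a * f).degree = (hf.unit⁻¹ • (a * f)).degree :=
        (degree_smul_of_smul_regular _ (isSMulRegular_of_group _)).symm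
    _ = (a * (hf.unit⁻¹ • f)).degree := by rw [mul_smul_comm]
    _ = a.degree + f.degree := by
        rw [hf₀.degree_mul, degree_smul_of_smul_regular _ (isSMulRegular_of_group _)]

theorem mem_degreeLT_of_mul_mem_degreeLT_add (hf : IsUnit f.leadingCoeff) {a : R[X]} {n : ℕ}
    (h : a * f ∈ degreeLT R (f.natDegree + n)) : a ∈ degreeLT R n := by
  nontriviality R
  rw [mem_degreeLT, degree_mul_of_isUnit_leadingCoeff hf,
    degree_eq_natDegree (leadingCoeff_ne_zero.1 hf.ne_zero), Nat.cast_add,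
    add_comm (f.natDegree : WithBot ℕ)] at h
  exact mem_degreeLT.2 ((WithBot.add_lt_add_iff_right WithBot.coe_ne_bot).1 h)

theorem exists_sub_mul_mem_degreeLT (hf : IsUnit f.leadingCoeff) (x : R[X]) :
    ∃ q, x - f * q ∈ degreeLT R f.natDegree := by
  nontriviality R
  have hf₀ : (hf.unit⁻¹ • f).Monic := monic_of_isUnit_leadingCoeff_inv_smul hf
  refine ⟨hf.unit⁻¹ • (x /ₘ (hf.unit⁻¹ • f)), ?_⟩
  rw [mul_smul_comm, ← smul_mul_assoc, ← modByMonic_eq_sub_mul_div, mem_degreeLT]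
  calc (x %ₘ (hf.unit⁻¹ • f)).degree < (hf.unit⁻¹ • f).degree := degree_modByMonic_lt x hf₀
    _ = f.degree := degree_smul_of_smul_regular _ (isSMulRegular_of_group _)
    _ ≤ f.natDegree := degree_le_natDegree

theorem exists_eq_mul_add_mul_of_dvd_sub_mul (hf : IsUnit f.leadingCoeff) {g p x : R[X]} {n : ℕ}
    (hg : g.natDegree ≤ n) (hp : p ∈ degreeLT R (f.natDegree + n)) (hdvd : f ∣ p - g * x) :
    ∃ a ∈ degreeLT R n, ∃ b ∈ degreeLT R f.natDegree, p = a * f + b * g := by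
  obtain ⟨q, hr⟩ := exists_sub_mul_mem_degreeLT hf x
  obtain ⟨c, hc⟩ := hdvd
  have hp_eq : p = (c + g * q) * f + (x - f * q) * g := by linear_combination hc
  refine ⟨c + g * q, mem_degreeLT_of_mul_mem_degreeLT_add hf ?_, x - f * q, hr, hp_eq⟩
  have ha_mul : (c + g * q) * f = p - (x - f * q) * g := by rw [hp_eq]; ring
  rw [ha_mul]
  exact sub_mem hp (mul_mem_degreeLT_add hr hg)

end Polynomial

/-- If the leading coefficient of `f` is a unit, the cokernel of the Sylvester map of `f` and
`g` (sending `(a, b)` with `deg a < deg g`, `deg b < deg f` to `a * f + b * g`) is isomorphic,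
as an `R`-module, to the cokernel of multiplication by `g` on `R[X] ⧸ (f)`. -/
theorem sylvester_coker_iso_mulByG_coker
    (R : Type*) [CommRing R] (f g : R[X]) (hf : IsUnit f.leadingCoeff)
    (syl : (↥(degreeLT R g.natDegree) × ↥(degreeLT R f.natDegree)) →ₗ[R]
      ↥(degreeLT R (f.natDegree + g.natDegree)))
    (hsyl : ∀ ab : ↥(degreeLT R g.natDegree) × ↥(degreeLT R f.natDegree),
      ((syl ab : R[X])) = (ab.1 : R[X]) * f + (ab.2 : R[X]) * g)
    (mulg : (R[X] ⧸ Ideal.span {f}) →ₗ[R] (R[X] ⧸ Ideal.span {f}))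
    (hmulg : ∀ x : R[X],
      mulg (Ideal.Quotient.mk (Ideal.span {f}) x) = Ideal.Quotient.mk (Ideal.span {f}) (g * x)) :
    Nonempty ((↥(degreeLT R (f.natDegree + g.natDegree)) ⧸ LinearMap.range syl) ≃ₗ[R]
      ((R[X] ⧸ Ideal.span {f}) ⧸ LinearMap.range mulg)) := by
  let π := (LinearMap.range mulg).mkQ ∘ₗ (Ideal.Quotient.mkₐ R (Ideal.span {f})).toLinearMap ∘ₗ
    (degreeLT R (f.natDegree + g.natDegree)).subtype
  have hπ : Function.Surjective π := by
    refine (Submodule.mkQ_surjective _).comp fun y ↦ ?_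
    obtain ⟨x, rfl⟩ := Ideal.Quotient.mk_surjective y
    obtain ⟨q, hr⟩ := exists_sub_mul_mem_degreeLT hf x
    refine ⟨⟨x - f * q, degreeLT_mono (Nat.le_add_right _ _) hr⟩, ?_⟩
    exact Ideal.Quotient.eq.2 (by simpa using Ideal.mem_span_singleton.2 (dvd_mul_right f q))
  have hker : LinearMap.range syl = LinearMap.ker π := by
    ext p
    simp only [LinearMap.mem_ker, π, LinearMap.comp_apply, Submodule.mkQ_apply,
      Submodule.Quotient.mk_eq_zero, LinearMap.mem_range]
    constructor
    · rintro ⟨⟨a, b⟩, rfl⟩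
      refine ⟨Ideal.Quotient.mk _ b, ?_⟩
      simp [hmulg, hsyl, mul_comm]
    · rintro ⟨y, hy⟩
      obtain ⟨x, rfl⟩ := Ideal.Quotient.mk_surjective y
      rw [hmulg] at hy
      obtain ⟨a, ha, b, hb, hab⟩ := exists_eq_mul_add_mul_of_dvd_sub_mul hf le_rfl p.2
        (Ideal.mem_span_singleton.1 (Ideal.Quotient.eq.1 hy.symm))
      exact ⟨(⟨a, ha⟩, ⟨b, hb⟩), Subtype.ext (by rw [hsyl, hab])⟩
  exact ⟨(Submodule.quotEquivOfEq _ _ hker).trans (π.quotKerEquivOfSurjective hπ)⟩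
end

section
/- Let k be a field and let h(s) ∈ k[s] be a monic polynomial of degree d ≥ 1 that splits over k. Then the resultant with respect to s of h(s) and the polynomial (h(t) − h(s))/(t − s) ∈ k[t][s] equals, up to a nonzero constant in k, the polynomial h(t)^{d−1} ∈ k[t]. -/
/-!
The difference quotient `g` of `f` at `r` satisfies `(X - r) * g = f - f(r)`. Mathlib's resultant
is multiplicative and `Res(X - r, f) = f(r)`, while reducing the first argument modulo `f` gives
`Res(f - f(r), f) = Res(-f(r), f) = f(r)^n` for monic `f` of degree `n`. Hence
`f(r) * Res(g, f) = f(r)^n`, and cancelling `f(r)` yields `Res(g, f) = f(r)^(n-1)`.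
Taking `f = h(s)` over `k[t]` and `r = t` gives the theorem with constant `1`.
-/

open Polynomial

/-- The Sylvester matrix of `p` and `q` (with respect to the variable `X`), where the first
`a` columns are the coefficient vectors of `X^j * p` and the last `b` columns those of
`X^j * q`; row `i` records the coefficient of `X^i`. -/
noncomputable def sylvMat {R : Type*} [CommRing R] (p q : R[X]) (a b : ℕ) :
    Matrix (Fin (a + b)) (Fin (a + b)) R :=
  Matrix.of fun i j =>
    Fin.addCases (fun j₁ : Fin a => (X ^ (j₁ : ℕ) * p).coeff (i : ℕ))
      (fun j₂ : Fin b => (X ^ (j₂ : ℕ) * q).coeff (i : ℕ)) j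

namespace Polynomial

variable {R : Type*} [CommRing R]

lemma coeff_X_pow_mul_of_natDegree_le {p : R[X]} {n : ℕ} (hp : p.natDegree ≤ n) (j i : ℕ) :
    (X ^ j * p).coeff i = if i ∈ Set.Icc j (j + n) then p.coeff (i - j) else 0 := by
  rw [coeff_X_pow_mul']
  by_cases hji : j ≤ i
  · by_cases hin : i ≤ j + n
    · simp [hji, hin]
    · simp only [hji, if_true, Set.mem_Icc, hin, and_false, if_false]
      exact coeff_eq_zero_of_natDegree_lt (by omega)
  · simp [hji]

lemma sylvMat_eq_sylvester {p q : R[X]} {a b : ℕ} (hp : p.natDegree ≤ b) (hq : q.natDegree ≤ a) :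
    sylvMat p q a b = sylvester q p a b := by
  ext i j
  induction j using Fin.addCases <;>
    simp [sylvMat, sylvester, coeff_X_pow_mul_of_natDegree_le hp,
      coeff_X_pow_mul_of_natDegree_le hq]

lemma resultant_sub_C_self {f : R[X]} (hf : f.Monic) (e : R) :
    resultant (f - C e) f f.natDegree f.natDegree = e ^ f.natDegree := by
  have hsub : f - C e = C (-e) + f * 1 := by rw [map_neg, mul_one, neg_add_eq_sub]
  rw [hsub, resultant_add_mul_left _ _ _ _ _ (by simp) le_rfl, resultant_C_left,
    hf.coeff_natDegree, one_pow, mul_one, neg_pow e, ← mul_assoc, ← pow_add, ← mul_add_one,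
    (Nat.even_mul_succ_self _).neg_one_pow, one_mul]

variable {f g : R[X]} {r : R}

section Nontrivial

variable [Nontrivial R]

lemma natDegree_eq_pred_of_X_sub_C_mul_eq (h0 : 0 < f.natDegree)
    (hg : (X - C r) * g = f - C (f.eval r)) : g.natDegree = f.natDegree - 1 := by
  have hg0 : g ≠ 0 := by
    rintro rfl
    have := congrArg natDegree hg
    rw [mul_zero, natDegree_zero, natDegree_sub_C] at this
    omega
  have := congrArg natDegree hg
  rw [(monic_X_sub_C r).natDegree_mul' hg0, natDegree_X_sub_C, natDegree_sub_C] at this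
  omega

lemma eval_mul_resultant_eq_pow (hf : f.Monic) (h0 : 0 < f.natDegree)
    (hg : (X - C r) * g = f - C (f.eval r)) :
    f.eval r * resultant g f (f.natDegree - 1) f.natDegree = f.eval r ^ f.natDegree := by
  have hdeg : (X - C r).natDegree + g.natDegree = f.natDegree := by
    rw [natDegree_X_sub_C, natDegree_eq_pred_of_X_sub_C_mul_eq h0 hg]; omega
  rw [← resultant_sub_C_self hf, ← hg, ← resultant_X_sub_C_left f f.natDegree r le_rfl,
    ← natDegree_eq_pred_of_X_sub_C_mul_eq h0 hg, ← natDegree_X_sub_C r,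
    ← resultant_mul_left _ _ _ _ le_rfl, hdeg]

end Nontrivial

lemma resultant_eq_eval_pow [IsDomain R] (hf : f.Monic) (h0 : 0 < f.natDegree)
    (hr : f.eval r ≠ 0) (hg : (X - C r) * g = f - C (f.eval r)) :
    resultant g f (f.natDegree - 1) f.natDegree = f.eval r ^ (f.natDegree - 1) := by
  refine mul_left_cancel₀ hr ?_
  rw [eval_mul_resultant_eq_pow hf h0 hg, ← pow_succ', Nat.sub_add_cancel h0]

end Polynomial

theorem resultant_diffQuotient_eq_pow_general
    (k : Type*) [Field k] (d : ℕ) (hd : 1 ≤ d) (h : k[X])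
    (hmonic : h.Monic) (hdeg : h.natDegree = d)
    (q : (k[X])[X])
    (hq : C h - h.map (C : k →+* k[X]) = (C X - X) * q) :
    ∃ γ : k, γ ≠ 0 ∧
      (sylvMat (h.map (C : k →+* k[X])) q (d - 1) d).det = Polynomial.C γ * h ^ (d - 1) := by
  set p := h.map (C : k →+* k[X])
  have hp : p.Monic := hmonic.map C
  have hpdeg : p.natDegree = d := by rw [hmonic.natDegree_map, hdeg]
  have hpX : p.eval X = h := by rw [eval_map, eval₂_C_X]
  have hpq : (X - C X) * q = p - C (p.eval X) := by rw [hpX]; linear_combination hq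
  have hqdeg : q.natDegree = d - 1 := hpdeg ▸ natDegree_eq_pred_of_X_sub_C_mul_eq (hpdeg ▸ hd) hpq
  refine ⟨1, one_ne_zero, ?_⟩
  rw [map_one, one_mul, sylvMat_eq_sylvester hpdeg.le hqdeg.le, ← resultant, ← hpdeg,
    resultant_eq_eval_pow hp (hpdeg ▸ hd) (hpX ▸ hmonic.ne_zero) hpq, hpX]

/-- For a monic split polynomial `h` of degree `d ≥ 1` over a field `k`, the resultant
(eliminating the variable `s`) of `h(s)` and the difference quotient `(h(t) - h(s))/(t - s)`
equals `h(t)^(d-1)` up to a nonzero constant of `k`.  Here the base ring is `k[t]`, the outer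
polynomial variable is `s`, so that `h(s)` is `h.map C` and `h(t)` is `C h`. -/
theorem resultant_diffQuotient_eq_pow
    (k : Type*) [Field k] (d : ℕ) (hd : 1 ≤ d) (h : k[X])
    (hmonic : h.Monic) (hdeg : h.natDegree = d)
    (hsplit : Splits (h.map (RingHom.id k)))
    (q : (k[X])[X])
    (hq : C h - h.map (C : k →+* k[X]) = (C X - X) * q) :
    ∃ γ : k, γ ≠ 0 ∧
      (sylvMat (h.map (C : k →+* k[X])) q (d - 1) d).det = Polynomial.C γ * h ^ (d - 1) :=
  resultant_diffQuotient_eq_pow_general k d hd h hmonic hdeg q hq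
end

section
/- Let k be a field and a, b, c ∈ k[s,v] homogeneous polynomials of the same degree n with gcd(a,b,c) = 1 and gcd(a,c) = gcd(b,c) = 1. Suppose (p₁,p₂,p₃) and (q₁,q₂,q₃) are syzygies of (a,b,c), i.e., p₁a + p₂b + p₃c = 0 and q₁a + q₂b + q₃c = 0, with homogeneous entries, and suppose that a = p₂q₃ − p₃q₂ and b = p₃q₁ − p₁q₃ up to a common nonzero constant. Then gcd(p₃, q₃) = gcd(a, b) up to a nonzero constant. -/
/-- Let `a, b, c` be homogeneous of degree `n` in `k[s,v]` with `gcd(a,b,c) = 1` and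
`gcd(a,c) = gcd(b,c) = 1`.  If `(p₁,p₂,p₃)` and `(q₁,q₂,q₃)` are homogeneous syzygies of
`(a,b,c)` with `a = p₂q₃ - p₃q₂` and `b = p₃q₁ - p₁q₃` up to a common nonzero constant, then
`gcd(p₃, q₃) = gcd(a, b)` up to a nonzero constant (i.e. they are associated). -/
theorem gcd_p₃_q₃_eq_gcd_a_b (k : Type*) [Field k]
    [GCDMonoid (MvPolynomial (Fin 2) k)]
    (n dp dq : ℕ)
    (a b c p₁ p₂ p₃ q₁ q₂ q₃ : MvPolynomial (Fin 2) k)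
    (ha : a.IsHomogeneous n) (hb : b.IsHomogeneous n) (hc : c.IsHomogeneous n)
    (habc : ∀ h : MvPolynomial (Fin 2) k, h ∣ a → h ∣ b → h ∣ c → IsUnit h)
    (hac : ∀ h : MvPolynomial (Fin 2) k, h ∣ a → h ∣ c → IsUnit h)
    (hbc : ∀ h : MvPolynomial (Fin 2) k, h ∣ b → h ∣ c → IsUnit h)
    (hp₁ : p₁.IsHomogeneous dp) (hp₂ : p₂.IsHomogeneous dp) (hp₃ : p₃.IsHomogeneous dp)
    (hq₁ : q₁.IsHomogeneous dq) (hq₂ : q₂.IsHomogeneous dq) (hq₃ : q₃.IsHomogeneous dq)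
    (hsyzp : p₁ * a + p₂ * b + p₃ * c = 0)
    (hsyzq : q₁ * a + q₂ * b + q₃ * c = 0)
    (hcross : ∃ lam : k, lam ≠ 0 ∧
      a = MvPolynomial.C lam * (p₂ * q₃ - p₃ * q₂) ∧
      b = MvPolynomial.C lam * (p₃ * q₁ - p₁ * q₃)) :
    Associated (gcd p₃ q₃) (gcd a b) := by

  obtain ⟨lam, hlam, hA, hB⟩ := hcross
  apply associated_of_dvd_dvd
  · -- gcd p₃ q₃ ∣ gcd a b
    apply dvd_gcd
    · rw [hA]
      exact Dvd.dvd.mul_left (dvd_sub ((gcd_dvd_right p₃ q₃).mul_left p₂)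
        ((gcd_dvd_left p₃ q₃).mul_right q₂)) _
    · rw [hB]
      exact Dvd.dvd.mul_left (dvd_sub ((gcd_dvd_left p₃ q₃).mul_right q₁)
        ((gcd_dvd_right p₃ q₃).mul_left p₁)) _
  · -- gcd a b ∣ gcd p₃ q₃
    set d := gcd a b with hd
    have hda : d ∣ a := gcd_dvd_left a b
    have hdb : d ∣ b := gcd_dvd_right a b
    have hu : IsUnit (gcd d c) := hac _ ((gcd_dvd_left d c).trans hda) (gcd_dvd_right d c)
    have key : ∀ r : MvPolynomial (Fin 2) k, d ∣ r * c → d ∣ r := by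
      intro r hr
      have h1 : d ∣ gcd d r * gcd d c := (dvd_gcd dvd_rfl hr).trans (gcd_mul_dvd_mul_gcd d r c)
      have h2 : d ∣ gcd d r := by
        obtain ⟨u, hu'⟩ := hu
        rw [← hu'] at h1
        exact Units.dvd_mul_right.mp h1
      exact h2.trans (gcd_dvd_right d r)
    apply dvd_gcd
    · apply key
      have : p₃ * c = -(p₁ * a + p₂ * b) := by linear_combination hsyzp
      rw [this]
      exact dvd_neg.mpr (dvd_add (hda.mul_left p₁) (hdb.mul_left p₂))
    · apply key
      have : q₃ * c = -(q₁ * a + q₂ * b) := by linear_combination hsyzq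
      rw [this]
      exact dvd_neg.mpr (dvd_add (hda.mul_left q₁) (hdb.mul_left q₂))
end

section
/- Let R be a commutative ring, n ≥ m ≥ 1, f = a₀ + a₁t + ⋯ + aₙtⁿ and g = b₀ + b₁t + ⋯ + bₘtᵐ in R[t]. For 0 ≤ k ≤ m−1 define fₖ(t) = aₙt^{n−m+k} + ⋯ + a_{m−k} and gₖ(t) = bₘtᵏ + ⋯ + b_{m−k}, and pₖ(t) = gₖ(t)f(t) − fₖ(t)g(t). Then deg(pₖ) ≤ n − 1 for every k = 0, …, m−1. -/
open Polynomial

lemma trunc_mul_X_pow {R : Type*} [CommRing R] (p : R[X]) (d K : ℕ) (hp : p.natDegree < d + (K + 1)) :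
    X ^ d * ∑ j ∈ Finset.range (K + 1), C (p.coeff (d + j)) * X ^ j =
      p - ∑ i ∈ Finset.range d, C (p.coeff i) * X ^ i := by
  rw [eq_sub_iff_add_eq, Finset.mul_sum]
  have hterm : ∀ j, X ^ d * (C (p.coeff (d + j)) * X ^ j) = C (p.coeff (d + j)) * X ^ (d + j) := by
    intro j; rw [pow_add]; ring
  simp_rw [hterm]
  conv_rhs => rw [p.as_sum_range' (d + (K + 1)) hp]
  conv_rhs => rw [Finset.sum_range_add]
  simp_rw [← C_mul_X_pow_eq_monomial]
  rw [add_comm]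

/-- For `f` of degree ≤ n and `g` of degree ≤ m (n ≥ m ≥ 1), with top parts
`fₖ = aₙt^(n-m+k) + ⋯ + a_(m-k)` and `gₖ = bₘtᵏ + ⋯ + b_(m-k)`, the polynomial
`pₖ = gₖ·f − fₖ·g` has degree at most `n − 1`, for every `0 ≤ k ≤ m − 1`. -/
theorem deg_pk_le (R : Type*) [CommRing R] (n m : ℕ) (hm : 1 ≤ m) (hmn : m ≤ n)
    (f g : R[X]) (hf : f.natDegree ≤ n) (hg : g.natDegree ≤ m)
    (k : ℕ) (hk : k ≤ m - 1) :
    ((∑ j ∈ Finset.range (k + 1), C (g.coeff (m - k + j)) * X ^ j) * f -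
        (∑ j ∈ Finset.range (n - m + k + 1), C (f.coeff (m - k + j)) * X ^ j) * g).degree ≤
      ((n - 1 : ℕ) : WithBot ℕ) := by
  nontriviality R
  rw [← natDegree_le_iff_degree_le]
  set d := m - k with hd
  set p := (∑ j ∈ Finset.range (k + 1), C (g.coeff (d + j)) * X ^ j) * f -
      (∑ j ∈ Finset.range (n - m + k + 1), C (f.coeff (d + j)) * X ^ j) * g with hpdef
  by_cases hp0 : p = 0
  · rw [hp0]; simp
  have key : p * X ^ d =
      (∑ i ∈ Finset.range d, C (f.coeff i) * X ^ i) * g -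
        (∑ i ∈ Finset.range d, C (g.coeff i) * X ^ i) * f := by
    have h1 : X ^ d * ∑ j ∈ Finset.range (k + 1), C (g.coeff (d + j)) * X ^ j =
        g - ∑ i ∈ Finset.range d, C (g.coeff i) * X ^ i :=
      trunc_mul_X_pow g d k (by omega)
    have h2 : X ^ d * ∑ j ∈ Finset.range (n - m + k + 1), C (f.coeff (d + j)) * X ^ j =
        f - ∑ i ∈ Finset.range d, C (f.coeff i) * X ^ i :=
      trunc_mul_X_pow f d (n - m + k) (by omega)
    calc p * X ^ d
        = (X ^ d * ∑ j ∈ Finset.range (k + 1), C (g.coeff (d + j)) * X ^ j) * f -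
          (X ^ d * ∑ j ∈ Finset.range (n - m + k + 1), C (f.coeff (d + j)) * X ^ j) * g := by
            rw [hpdef]; ring
      _ = _ := by rw [h1, h2]; ring
  have hdeg : (p * X ^ d).natDegree ≤ n - 1 + d := by
    rw [key]
    refine (natDegree_sub_le _ _).trans (max_le ?_ ?_)
    · refine natDegree_mul_le.trans ?_
      have h3 : (∑ i ∈ Finset.range d, C (f.coeff i) * X ^ i).natDegree ≤ d - 1 :=
        natDegree_sum_le_of_forall_le _ _ (fun i hi => (natDegree_C_mul_X_pow_le _ i).trans
          (by simp at hi; omega))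
      omega
    · refine natDegree_mul_le.trans ?_
      have h3 : (∑ i ∈ Finset.range d, C (g.coeff i) * X ^ i).natDegree ≤ d - 1 :=
        natDegree_sum_le_of_forall_le _ _ (fun i hi => (natDegree_C_mul_X_pow_le _ i).trans
          (by simp at hi; omega))
      omega
  rw [natDegree_mul_X_pow d hp0] at hdeg
  omega
end

section
/- Let k be a field and f, g ∈ k[t] nonzero polynomials of degrees n and m ≤ n. The corank of the (n+m)×(n+m) Sylvester matrix of f and g (i.e., n + m minus its rank) equals the degree of gcd(f, g). -/
open Polynomial

section Aux

variable {k : Type*} [Field k]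

lemma coeff_sum_smul_pow {N : ℕ} (w : Fin N → k) (i : Fin N) :
    (∑ j : Fin N, w j • (X : k[X]) ^ (j : ℕ)).coeff (i : ℕ) = w i := by
  rw [finset_sum_coeff]
  simp only [coeff_smul, coeff_X_pow, smul_eq_mul, mul_ite, mul_one, mul_zero]
  rw [Finset.sum_eq_single i]
  · simp
  · intro j _ hj
    rw [if_neg fun h => hj (Fin.ext h).symm]
  · simp

lemma sum_coeff_smul_pow_mem {N : ℕ} (w : Fin N → k) :
    (∑ j : Fin N, w j • (X : k[X]) ^ (j : ℕ)) ∈ degreeLT k N := by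
  refine Submodule.sum_mem _ fun j _ => Submodule.smul_mem _ _ ?_
  rw [mem_degreeLT, degree_X_pow]
  exact_mod_cast j.isLt

lemma restore_of_degreeLT {N : ℕ} {p : k[X]} (hp : p ∈ degreeLT k N) :
    (∑ j : Fin N, p.coeff (j : ℕ) • (X : k[X]) ^ (j : ℕ)) = p := by
  rw [mem_degreeLT] at hp
  ext i
  rw [finset_sum_coeff]
  simp only [coeff_smul, coeff_X_pow, smul_eq_mul, mul_ite, mul_one, mul_zero]
  by_cases h : i < N
  · rw [Finset.sum_eq_single (⟨i, h⟩ : Fin N)]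
    · simp
    · intro j _ hj
      rw [if_neg fun hij => hj (Fin.ext hij.symm)]
    · simp
  · rw [coeff_eq_zero_of_degree_lt (hp.trans_le (by exact_mod_cast Nat.le_of_not_lt h))]
    refine Finset.sum_eq_zero fun j _ => ?_
    rw [if_neg fun hij => h (by rw [hij]; exact j.isLt)]

lemma mul_mem_degreeLT' {p q : k[X]} {a b : ℕ} (hp : p ∈ degreeLT k a) (hq : q.degree ≤ b) :
    p * q ∈ degreeLT k (a + b) := by
  rw [mem_degreeLT] at hp ⊢
  rcases eq_or_ne p 0 with rfl | hp0
  · rw [zero_mul, degree_zero]; exact WithBot.bot_lt_coe _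
  rcases eq_or_ne q 0 with rfl | hq0
  · rw [mul_zero, degree_zero]; exact WithBot.bot_lt_coe _
  have h1 : p.natDegree < a := natDegree_lt_iff_degree_lt hp0 |>.2 hp
  have h2 : q.natDegree ≤ b := natDegree_le_iff_degree_le.2 hq
  calc (p * q).degree ≤ p.degree + q.degree := degree_mul_le _ _
    _ = ((p.natDegree + q.natDegree : ℕ) : WithBot ℕ) := by
        rw [degree_eq_natDegree hp0, degree_eq_natDegree hq0]; push_cast; ring
    _ < ((a + b : ℕ) : WithBot ℕ) := by exact_mod_cast by omega

/-- The polynomial with coefficient vector `v`. -/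
noncomputable def polyOfVec (k : Type*) [Field k] (N : ℕ) : (Fin N → k) →ₗ[k] k[X] where
  toFun v := ∑ j : Fin N, v j • (X : k[X]) ^ (j : ℕ)
  map_add' u v := by simp [add_smul, Finset.sum_add_distrib]
  map_smul' c v := by simp [smul_smul, Finset.smul_sum]

@[simp] lemma polyOfVec_apply {N : ℕ} (v : Fin N → k) :
    polyOfVec k N v = ∑ j : Fin N, v j • (X : k[X]) ^ (j : ℕ) := rfl

/-- The linear map underlying the Sylvester matrix. -/
noncomputable def sylLin (k : Type*) [Field k] (f g : k[X]) (m n : ℕ) :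
    (Fin (m + n) → k) →ₗ[k] k[X] :=
  (LinearMap.mulRight k f).comp ((polyOfVec k m).comp (LinearMap.funLeft k k (Fin.castAdd n)))
    + (LinearMap.mulRight k g).comp ((polyOfVec k n).comp (LinearMap.funLeft k k (Fin.natAdd m)))

lemma sylLin_apply (f g : k[X]) (m n : ℕ) (v : Fin (m + n) → k) :
    sylLin k f g m n v =
      (∑ j : Fin m, v (Fin.castAdd n j) • (X : k[X]) ^ (j : ℕ)) * f
        + (∑ j : Fin n, v (Fin.natAdd m j) • (X : k[X]) ^ (j : ℕ)) * g := by
  simp [sylLin, LinearMap.funLeft, Function.comp, Finset.sum_mul, smul_mul_assoc]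

lemma sylLin_coeff (f g : k[X]) (m n : ℕ) (v : Fin (m + n) → k) (i : Fin (m + n)) :
    ((sylvMat f g m n).mulVec v) i = (sylLin k f g m n v).coeff (i : ℕ) := by
  rw [sylLin_apply, coeff_add]
  have hL : (∑ j : Fin m, v (Fin.castAdd n j) • (X : k[X]) ^ (j : ℕ)) * f
      = ∑ j : Fin m, v (Fin.castAdd n j) • ((X : k[X]) ^ (j : ℕ) * f) := by
    rw [Finset.sum_mul]; simp [smul_mul_assoc]
  have hR : (∑ j : Fin n, v (Fin.natAdd m j) • (X : k[X]) ^ (j : ℕ)) * g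
      = ∑ j : Fin n, v (Fin.natAdd m j) • ((X : k[X]) ^ (j : ℕ) * g) := by
    rw [Finset.sum_mul]; simp [smul_mul_assoc]
  rw [hL, hR, finset_sum_coeff, finset_sum_coeff]
  simp only [coeff_smul, smul_eq_mul]
  rw [Matrix.mulVec, dotProduct, Fin.sum_univ_add]
  congr 1 <;> refine Finset.sum_congr rfl fun j _ => ?_ <;>
    simp [sylvMat, mul_comm]

lemma sylLin_mem_degreeLT (f g : k[X]) (m n : ℕ) (hf : f.degree ≤ n) (hg : g.degree ≤ m)
    (v : Fin (m + n) → k) : sylLin k f g m n v ∈ degreeLT k (m + n) := by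
  rw [sylLin_apply]
  refine Submodule.add_mem _ (mul_mem_degreeLT' (sum_coeff_smul_pow_mem _) hf) ?_
  have := mul_mem_degreeLT' (sum_coeff_smul_pow_mem (fun j : Fin n => v (Fin.natAdd m j))) hg
  rwa [Nat.add_comm n m] at this

lemma ker_sylvMat (f g : k[X]) (m n : ℕ) (hf : f.degree ≤ n) (hg : g.degree ≤ m) :
    LinearMap.ker (sylvMat f g m n).mulVecLin = LinearMap.ker (sylLin k f g m n) := by
  ext v
  simp only [LinearMap.mem_ker, Matrix.mulVecLin_apply]
  constructor
  · intro h
    have hdeg := sylLin_mem_degreeLT f g m n hf hg v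
    rw [mem_degreeLT] at hdeg
    ext i
    by_cases hi : i < m + n
    · have := congrFun h ⟨i, hi⟩
      rw [sylLin_coeff] at this
      simpa using this
    · simp only [coeff_zero]
      exact coeff_eq_zero_of_degree_lt
        (hdeg.trans_le (by exact_mod_cast Nat.le_of_not_lt hi))
  · intro h
    funext i
    rw [sylLin_coeff, h]
    simp

/-- The map sending `c` to the coefficient vector of the pair `(c * g', -(c * f'))`. -/
noncomputable def pairVec (f' g' : k[X]) (m n N : ℕ) :
    degreeLT k N →ₗ[k] (Fin (m + n) → k) where
  toFun c := Fin.append (fun j₁ : Fin m => ((c : k[X]) * g').coeff (j₁ : ℕ))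
    (fun j₂ : Fin n => (-((c : k[X]) * f')).coeff (j₂ : ℕ))
  map_add' c₁ c₂ := by
    funext j
    refine Fin.addCases (fun j₁ => ?_) (fun j₂ => ?_) j <;>
      simp [Fin.append_left, Fin.append_right, add_mul, add_comm]
  map_smul' a c := by
    funext j
    refine Fin.addCases (fun j₁ => ?_) (fun j₂ => ?_) j <;>
      simp [Fin.append_left, Fin.append_right, smul_mul_assoc]

end Aux

/-- For nonzero `f, g ∈ k[t]` of degrees `n` and `m ≤ n`, the corank of the
`(n+m) × (n+m)` Sylvester matrix of `f` and `g` equals the degree of `gcd(f, g)`. -/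
theorem sylvester_corank_eq_deg_gcd (k : Type*) [Field k] [GCDMonoid k[X]] (n m : ℕ)
    (f g : k[X]) (hf : f ≠ 0) (hg : g ≠ 0)
    (hn : f.natDegree = n) (hm : g.natDegree = m) (hmn : m ≤ n) :
    (m + n) - (sylvMat f g m n).rank = (gcd f g).natDegree := by
  set d := gcd f g with hd
  have hd0 : d ≠ 0 := fun h => hf ((gcd_eq_zero_iff f g).1 h).1
  obtain ⟨f', hf'⟩ : d ∣ f := gcd_dvd_left f g
  obtain ⟨g', hg'⟩ : d ∣ g := gcd_dvd_right f g
  have hf'0 : f' ≠ 0 := fun h => hf (by rw [hf', h, mul_zero])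
  have hg'0 : g' ≠ 0 := fun h => hg (by rw [hg', h, mul_zero])
  have hcop : IsCoprime f' g' := by
    rw [← gcd_isUnit_iff]
    have hdf : d * gcd f' g' ∣ f := by
      rw [hf']; exact mul_dvd_mul_left d (gcd_dvd_left _ _)
    have hdg : d * gcd f' g' ∣ g := by
      rw [hg']; exact mul_dvd_mul_left d (gcd_dvd_right _ _)
    have h1 : d * gcd f' g' ∣ d * 1 := by
      rw [mul_one, hd]
      exact dvd_gcd hdf hdg
    exact isUnit_of_dvd_one ((mul_dvd_mul_iff_left hd0).1 h1)
  -- degree bookkeeping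
  have hnf : d.natDegree + f'.natDegree = n := by
    rw [← hn, hf', natDegree_mul hd0 hf'0]
  have hng : d.natDegree + g'.natDegree = m := by
    rw [← hm, hg', natDegree_mul hd0 hg'0]
  have hfdeg : f.degree ≤ (n : WithBot ℕ) := by
    rw [degree_eq_natDegree hf, hn]
  have hgdeg : g.degree ≤ (m : WithBot ℕ) := by
    rw [degree_eq_natDegree hg, hm]
  have hg'deg : g'.degree ≤ (g'.natDegree : WithBot ℕ) := degree_le_natDegree
  have hf'deg : f'.degree ≤ (f'.natDegree : WithBot ℕ) := degree_le_natDegree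
  -- membership of images of pairVec in the kernel of sylLin
  have hmemL : ∀ c : degreeLT k d.natDegree,
      ((c : k[X]) * g') ∈ degreeLT k m := fun c => by
    have := mul_mem_degreeLT' c.2 hg'deg
    rwa [hng] at this
  have hmemR : ∀ c : degreeLT k d.natDegree,
      ((c : k[X]) * f') ∈ degreeLT k n := fun c => by
    have := mul_mem_degreeLT' c.2 hf'deg
    rwa [hnf] at this
  have hpair_left : ∀ (c : degreeLT k d.natDegree) (j : Fin m),
      pairVec (k := k) f' g' m n d.natDegree c (Fin.castAdd n j)
        = ((c : k[X]) * g').coeff (j : ℕ) := fun c j => by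
    simp [pairVec, Fin.append_left]
  have hpair_right : ∀ (c : degreeLT k d.natDegree) (j : Fin n),
      pairVec (k := k) f' g' m n d.natDegree c (Fin.natAdd m j)
        = (-((c : k[X]) * f')).coeff (j : ℕ) := fun c j => by
    simp [pairVec, Fin.append_right]
  have hmem : ∀ c : degreeLT k d.natDegree,
      pairVec (k := k) f' g' m n d.natDegree c ∈ LinearMap.ker (sylLin k f g m n) := by
    intro c
    rw [LinearMap.mem_ker, sylLin_apply]
    have e1 : (∑ j : Fin m, pairVec (k := k) f' g' m n d.natDegree c (Fin.castAdd n j)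
        • (X : k[X]) ^ (j : ℕ)) = (c : k[X]) * g' := by
      calc (∑ j : Fin m, pairVec (k := k) f' g' m n d.natDegree c (Fin.castAdd n j)
            • (X : k[X]) ^ (j : ℕ))
          = ∑ j : Fin m, ((c : k[X]) * g').coeff (j : ℕ) • (X : k[X]) ^ (j : ℕ) := by
            refine Finset.sum_congr rfl fun j _ => by rw [hpair_left]
        _ = (c : k[X]) * g' := restore_of_degreeLT (hmemL c)
    have e2 : (∑ j : Fin n, pairVec (k := k) f' g' m n d.natDegree c (Fin.natAdd m j)
        • (X : k[X]) ^ (j : ℕ)) = -((c : k[X]) * f') := by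
      calc (∑ j : Fin n, pairVec (k := k) f' g' m n d.natDegree c (Fin.natAdd m j)
            • (X : k[X]) ^ (j : ℕ))
          = ∑ j : Fin n, (-((c : k[X]) * f')).coeff (j : ℕ) • (X : k[X]) ^ (j : ℕ) := by
            refine Finset.sum_congr rfl fun j _ => by rw [hpair_right]
        _ = -((c : k[X]) * f') := by
            refine restore_of_degreeLT ?_
            exact Submodule.neg_mem _ (hmemR c)
    rw [e1, e2, hf', hg']
    ring
  -- the codomain-restricted map, and its bijectivity
  let T : degreeLT k d.natDegree →ₗ[k] LinearMap.ker (sylLin k f g m n) :=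
    LinearMap.codRestrict _ (pairVec (k := k) f' g' m n d.natDegree) hmem
  have hinj : Function.Injective T := by
    rw [← LinearMap.ker_eq_bot, LinearMap.ker_eq_bot']
    intro c hc
    have hc' : pairVec (k := k) f' g' m n d.natDegree c = 0 := by
      have := congrArg (Subtype.val) hc
      simpa [T, LinearMap.codRestrict] using this
    have hzero : (c : k[X]) * g' = 0 := by
      rw [← restore_of_degreeLT (hmemL c)]
      refine Finset.sum_eq_zero fun j _ => ?_
      rw [← hpair_left c j, hc']
      simp
    have : (c : k[X]) = 0 := by
      rcases mul_eq_zero.1 hzero with h | h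
      · exact h
      · exact absurd h hg'0
    exact Subtype.ext this
  have hsurj : Function.Surjective T := by
    rintro ⟨v, hv⟩
    rw [LinearMap.mem_ker, sylLin_apply] at hv
    set a : k[X] := ∑ j : Fin m, v (Fin.castAdd n j) • (X : k[X]) ^ (j : ℕ) with ha
    set b : k[X] := ∑ j : Fin n, v (Fin.natAdd m j) • (X : k[X]) ^ (j : ℕ) with hb
    have hamem : a ∈ degreeLT k m := sum_coeff_smul_pow_mem _
    have hbmem : b ∈ degreeLT k n := sum_coeff_smul_pow_mem _
    -- a * f + b * g = 0, cancel d
    have key : a * f' + b * g' = 0 := by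
      have : d * (a * f' + b * g') = 0 := by
        rw [mul_add]
        calc d * (a * f') + d * (b * g') = a * (d * f') + b * (d * g') := by ring
          _ = a * f + b * g := by rw [← hf', ← hg']
          _ = 0 := hv
      exact (mul_eq_zero.1 this).resolve_left hd0
    have hdvd : g' ∣ a := by
      refine hcop.symm.dvd_of_dvd_mul_right ⟨-b, by linear_combination key⟩
    obtain ⟨c, hc⟩ := hdvd
    have hbc : b = -(c * f') := by
      have h0 : g' * (c * f' + b) = 0 := by
        have : a * f' + b * g' = g' * (c * f') + b * g' := by rw [hc]; ring
        rw [this] at key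
        linear_combination key
      exact eq_neg_of_add_eq_zero_right ((mul_eq_zero.1 h0).resolve_left hg'0)
    have hcmem : c ∈ degreeLT k d.natDegree := by
      rcases eq_or_ne c 0 with rfl | hc0
      · exact Submodule.zero_mem _
      rw [mem_degreeLT, degree_eq_natDegree hc0]
      have ha0 : a ≠ 0 := hc ▸ mul_ne_zero hg'0 hc0
      have hlt : a.natDegree < m := (natDegree_lt_iff_degree_lt ha0).2 (mem_degreeLT.1 hamem)
      rw [hc, natDegree_mul hg'0 hc0] at hlt
      exact_mod_cast (by omega : c.natDegree < d.natDegree)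
    refine ⟨⟨c, hcmem⟩, ?_⟩
    apply Subtype.ext
    have hT : (T ⟨c, hcmem⟩ : Fin (m + n) → k)
        = pairVec (k := k) f' g' m n d.natDegree ⟨c, hcmem⟩ := rfl
    rw [hT]
    funext j
    refine Fin.addCases (fun j₁ => ?_) (fun j₂ => ?_) j
    · rw [hpair_left ⟨c, hcmem⟩ j₁]
      have : (c * g') = a := by rw [hc]; ring
      rw [show ((⟨c, hcmem⟩ : degreeLT k d.natDegree) : k[X]) = c from rfl, this, ha,
        coeff_sum_smul_pow (fun j : Fin m => v (Fin.castAdd n j)) j₁]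
    · rw [hpair_right ⟨c, hcmem⟩ j₂]
      rw [show ((⟨c, hcmem⟩ : degreeLT k d.natDegree) : k[X]) = c from rfl, ← hbc, hb,
        coeff_sum_smul_pow (fun j : Fin n => v (Fin.natAdd m j)) j₂]
  -- assemble
  have E : degreeLT k d.natDegree ≃ₗ[k] LinearMap.ker (sylLin k f g m n) :=
    LinearEquiv.ofBijective T ⟨hinj, hsurj⟩
  have hkerdim : Module.finrank k (LinearMap.ker (sylvMat f g m n).mulVecLin) = d.natDegree := by
    rw [ker_sylvMat f g m n hfdeg hgdeg, ← LinearEquiv.finrank_eq E,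
      LinearEquiv.finrank_eq (degreeLTEquiv k d.natDegree), Module.finrank_fin_fun]
  have hrn := LinearMap.finrank_range_add_finrank_ker ((sylvMat f g m n).mulVecLin)
  rw [Module.finrank_fin_fun, hkerdim] at hrn
  rw [show (sylvMat f g m n).rank
      = Module.finrank k (LinearMap.range (sylvMat f g m n).mulVecLin) from rfl]
  omega
end
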